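/- Assume q_i ≠ 1 for all i. For k⃗ = (k₁, …, kₙ) ∈ ℤⁿ define b_{k⃗} = b_{k⃗,1} b_{k⃗,2} ⋯ b_{k⃗,n} ∈ 𝒜ₙ^{q,Λ}, where b_{k⃗,i} = x_i^{k_i} if k_i ≥ 0 and b_{k⃗,i} = y_i^{−k_i} if k_i ≤ 0. Then for every i and every k⃗ ∈ ℤⁿ: x_i b_{k⃗} = (∏_{j<i} λ_{ij}^{k_j}) b_{k⃗+e_i} if k_i ≥ 0, and x_i b_{k⃗} = (∏_{j<i} λ_{ij}^{k_j}) · b_{k⃗+e_i} · (q_i − 1)^{-1}(q_i^{−k_i} z_i − 1) if k_i < 0; while y_i b_{k⃗} = (∏_{j<i} λ_{ij}^{k_j})^{-1} · b_{k⃗−e_i} · (q_i − 1)^{-1}(q_i^{−k_i+1} z_i − 1) if k_i > 0, and y_i b_{k⃗} = (∏_{j<i} λ_{ij}^{k_j})^{-1} b_{k⃗−e_i} if k_i ≤ 0. Here e_i is the i-th standard basis vector of ℤⁿ, the powers q_i^{m} for m ∈ ℤ are taken in the group of units of k, and (q_i − 1)^{-1}(c z_i − 1) denotes the scalar (q_i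 − 1)^{-1} ∈ k times the element c·z_i − 1 of 𝒜ₙ^{q,Λ}. -/

import Mathlib

/-! The Akhavizadegan–Jordan quantized Weyl algebra `𝒜ₙ^{q,Λ}`, realized as a `RingQuot`
of the free algebra on generators `x₁, …, xₙ, y₁, …, yₙ`. -/

/-- `x_i` in the free algebra. -/
def fX (k : Type*) [Field k] (n : ℕ) (i : Fin n) : FreeAlgebra k (Fin n ⊕ Fin n) :=
  FreeAlgebra.ι k (Sum.inl i)

/-- `y_i` in the free algebra. -/
def fY (k : Type*) [Field k] (n : ℕ) (i : Fin n) : FreeAlgebra k (Fin n ⊕ Fin n) :=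
  FreeAlgebra.ι k (Sum.inr i)

/-- The defining relations of the Akhavizadegan–Jordan quantized Weyl algebra. -/
inductive AJRel (k : Type*) [Field k] (n : ℕ) (q : Fin n → k) (Λ : Fin n → Fin n → k) :
    FreeAlgebra k (Fin n ⊕ Fin n) → FreeAlgebra k (Fin n ⊕ Fin n) → Prop
  | xx {i j : Fin n} : i < j →
      AJRel k n q Λ (fX k n i * fX k n j) (Λ i j • (fX k n j * fX k n i))
  | yy {i j : Fin n} : i < j →
      AJRel k n q Λ (fY k n i * fY k n j) (Λ i j • (fY k n j * fY k n i))
  | xy {i j : Fin n} : i < j →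
      AJRel k n q Λ (fX k n i * fY k n j) ((Λ i j)⁻¹ • (fY k n j * fX k n i))
  | yx {i j : Fin n} : i < j →
      AJRel k n q Λ (fY k n i * fX k n j) ((Λ i j)⁻¹ • (fX k n j * fY k n i))
  | xyi (i : Fin n) :
      AJRel k n q Λ (fX k n i * fY k n i) (q i • (fY k n i * fX k n i) + 1)

/-- The Akhavizadegan–Jordan quantized Weyl algebra `𝒜ₙ^{q,Λ}`. -/
abbrev AJWeyl (k : Type*) [Field k] (n : ℕ) (q : Fin n → k) (Λ : Fin n → Fin n → k) :=
  RingQuot (AJRel k n q Λ)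

/-- The generator `x_i` of `𝒜ₙ^{q,Λ}`. -/
def ajX (k : Type*) [Field k] (n : ℕ) (q : Fin n → k) (Λ : Fin n → Fin n → k) (i : Fin n) :
    AJWeyl k n q Λ :=
  RingQuot.mkAlgHom k (AJRel k n q Λ) (fX k n i)

/-- The generator `y_i` of `𝒜ₙ^{q,Λ}`. -/
def ajY (k : Type*) [Field k] (n : ℕ) (q : Fin n → k) (Λ : Fin n → Fin n → k) (i : Fin n) :
    AJWeyl k n q Λ :=
  RingQuot.mkAlgHom k (AJRel k n q Λ) (fY k n i)

/-- The element `z_i = x_i y_i - y_i x_i` of `𝒜ₙ^{q,Λ}`. -/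
def ajZ (k : Type*) [Field k] (n : ℕ) (q : Fin n → k) (Λ : Fin n → Fin n → k) (i : Fin n) :
    AJWeyl k n q Λ :=
  ajX k n q Λ i * ajY k n q Λ i - ajY k n q Λ i * ajX k n q Λ i

/-- The basis element `b_{k⃗} = b_{k⃗,1} ⋯ b_{k⃗,n}` of `𝒜ₙ^{q,Λ}` attached to `k⃗ ∈ ℤⁿ`,
where `b_{k⃗,i} = x_i^{k_i}` if `k_i ≥ 0` and `b_{k⃗,i} = y_i^{-k_i}` if `k_i ≤ 0`. -/
def ajB (k : Type*) [Field k] (n : ℕ) (q : Fin n → k) (Λ : Fin n → Fin n → k)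
    (kv : Fin n → ℤ) : AJWeyl k n q Λ :=
  ((List.finRange n).map (fun i =>
    if 0 ≤ kv i then ajX k n q Λ i ^ (kv i).toNat
    else ajY k n q Λ i ^ (-(kv i)).toNat)).prod

/-!
Write `z = xy - yx` for a pair with `xy - q yx = 1`. Then `z y = q y z` and `x z = q z x`, so
`w(c) = (q - 1)⁻¹ (c z - 1)` satisfies `w(c) y = y w(q c)` and `w(c) x = x w(q⁻¹ c)`; starting from
`xy = w(q)` and `yx = w(1)`, induction gives `x y^(m+1) = y^m w(q^(m+1))` and
`y x^(m+1) = x^m w(q^(-m))`.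

In `b_k = b_{k,1} ⋯ b_{k,n}` the generator `x_i` (or `y_i`) moves to the left past the factors with
`j < i`, collecting `λ_{ij}^{± k_j}`, acts on `b_{k,i}` by the formulas above, and the resulting
`w(c)` moves to the right past the factors with `j > i`, since `z_i` commutes with `x_j` and `y_j`
for `j ≠ i`.
-/

section SMulCommute

variable {R A : Type*} [CommSemiring R] [Semiring A] [Algebra R A]

theorem mul_pow_eq_smul_of_mul_eq_smul {u v : A} {c : R} (h : u * v = c • (v * u)) (m : ℕ) :
    u * v ^ m = c ^ m • (v ^ m * u) := by
  induction m with
  | zero => simp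
  | succ m ih =>
    rw [pow_succ', ← mul_assoc, h, smul_mul_assoc, mul_assoc, ih, mul_smul_comm, smul_smul,
      ← mul_assoc, ← pow_succ', ← pow_succ']

theorem mul_prod_finRange_map_eq_smul {n : ℕ} (i : Fin n) {f g : Fin n → A} {c : Fin n → R}
    {u v : A} (hfg : ∀ j ≠ i, f j = g j) (hlt : ∀ j < i, u * f j = c j • (f j * u))
    (hgt : ∀ j, i < j → Commute v (f j)) (hi : u * f i = g i * v) :
    u * ((List.finRange n).map f).prod =
      (∏ j with j < i, c j) • (((List.finRange n).map g).prod * v) := by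
  induction n with
  | zero => exact i.elim0
  | succ n ih =>
    simp only [List.finRange_succ, List.map_cons, List.prod_cons, List.map_map]
    cases i using Fin.cases with
    | zero =>
      have hrest : (List.finRange n).map (f ∘ Fin.succ) = (List.finRange n).map (g ∘ Fin.succ) :=
        List.map_congr_left fun j _ => hfg _ (Fin.succ_ne_zero j)
      have hv : Commute v ((List.finRange n).map (f ∘ Fin.succ)).prod :=
        Commute.list_prod_right _ _ fun a ha => by
          obtain ⟨j, -, rfl⟩ := List.mem_map.mp ha
          exact hgt _ (Fin.succ_pos j)
      simp only [Fin.not_lt_zero, Finset.filter_false, Finset.prod_empty, one_smul]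
      rw [← mul_assoc, hi, mul_assoc, hv.eq, hrest, mul_assoc]
    | succ i =>
      have hprod : ∏ j with j < i.succ, c j = c 0 * ∏ j with j < i, c j.succ := by
        simp only [Finset.prod_filter, Fin.prod_univ_succ, Fin.succ_pos, if_true,
          Fin.succ_lt_succ_iff]
      rw [← mul_assoc, hlt 0 (Fin.succ_pos i), smul_mul_assoc, mul_assoc,
        ih i (f := f ∘ Fin.succ) (g := g ∘ Fin.succ)
          (fun j hj => hfg _ (Fin.succ_injective _ |>.ne hj))
          (fun j hj => hlt _ (Fin.succ_lt_succ_iff.mpr hj))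
          (fun j hj => hgt _ (Fin.succ_lt_succ_iff.mpr hj)) hi,
        hfg 0 (Fin.succ_ne_zero i).symm, hprod, mul_smul_comm, smul_smul, mul_assoc]

end SMulCommute

section QWeylPair

variable {R A : Type*} [Field R] [Ring A] [Algebra R A] {q : R} {x y : A}

theorem commute_commutator_of_mul_eq_smul {a : A} {c : R} (hc : c ≠ 0)
    (hx : x * a = c • (a * x)) (hy : y * a = c⁻¹ • (a * y)) : Commute (x * y - y * x) a := by
  have hxy : x * y * a = a * (x * y) := by
    rw [mul_assoc, hy, mul_smul_comm, ← mul_assoc, hx, smul_mul_assoc, smul_smul,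
      inv_mul_cancel₀ hc, one_smul, mul_assoc]
  have hyx : y * x * a = a * (y * x) := by
    rw [mul_assoc, hx, mul_smul_comm, ← mul_assoc, hy, smul_mul_assoc, smul_smul,
      mul_inv_cancel₀ hc, one_smul, mul_assoc]
  exact Commute.sub_left hxy hyx

variable (h : x * y = q • (y * x) + 1)
include h

theorem commutator_eq_of_qWeyl : x * y - y * x = (q - 1) • (y * x) + 1 := by
  rw [h]; module

theorem commutator_mul_of_qWeyl : (x * y - y * x) * y = q • (y * (x * y - y * x)) := by
  rw [commutator_eq_of_qWeyl h, add_mul, smul_mul_assoc, mul_assoc, h]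
  simp only [mul_add, mul_smul_comm, mul_one, one_mul]
  module

theorem mul_commutator_of_qWeyl : x * (x * y - y * x) = q • ((x * y - y * x) * x) := by
  rw [commutator_eq_of_qWeyl h, mul_add, mul_smul_comm, ← mul_assoc, h]
  simp only [add_mul, smul_mul_assoc, mul_assoc, one_mul, mul_one]
  module

theorem mul_pow_succ_of_qWeyl (hq1 : q ≠ 1) (m : ℕ) :
    x * y ^ (m + 1) = y ^ m * ((q - 1)⁻¹ • (q ^ (m + 1) • (x * y - y * x) - 1)) := by
  have hq1' : q - 1 ≠ 0 := sub_ne_zero.mpr hq1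
  induction m with
  | zero =>
    rw [zero_add, pow_one, pow_zero, one_mul, commutator_eq_of_qWeyl h, h]
    match_scalars <;> field_simp
  | succ m ih =>
    rw [pow_succ, ← mul_assoc, ih, mul_assoc, smul_mul_assoc, sub_mul, smul_mul_assoc,
      commutator_mul_of_qWeyl h, one_mul, smul_smul, pow_succ y m, mul_assoc]
    congr 1
    simp only [mul_smul_comm, mul_sub, mul_one, pow_succ q (m + 1)]

theorem pow_succ_mul_of_qWeyl (hq0 : q ≠ 0) (hq1 : q ≠ 1) (m : ℕ) :
    y * x ^ (m + 1) = x ^ m * ((q - 1)⁻¹ • (q ^ (-(m : ℤ)) • (x * y - y * x) - 1)) := by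
  have hq1' : q - 1 ≠ 0 := sub_ne_zero.mpr hq1
  have hzx : (x * y - y * x) * x = q⁻¹ • (x * (x * y - y * x)) := by
    rw [mul_commutator_of_qWeyl h, smul_smul, inv_mul_cancel₀ hq0, one_smul]
  induction m with
  | zero =>
    rw [commutator_eq_of_qWeyl h]
    simp only [zero_add, pow_one, pow_zero, one_mul, Nat.cast_zero, neg_zero, zpow_zero,
      one_smul, add_sub_cancel_right, smul_smul, inv_mul_cancel₀ hq1']
  | succ m ih =>
    rw [pow_succ, ← mul_assoc, ih, mul_assoc, smul_mul_assoc, sub_mul, smul_mul_assoc, hzx,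
      one_mul, smul_smul, pow_succ x m, mul_assoc]
    congr 1
    simp only [mul_smul_comm, mul_sub, mul_one]
    congr 2
    rw [Nat.cast_succ, neg_add, zpow_add₀ hq0, zpow_neg_one, mul_comm]

end QWeylPair

section AJWeylRelations

variable {k : Type*} [Field k] {n : ℕ} (q : Fin n → k) (Λ : Fin n → Fin n → k)

local notation "X" => ajX k n q Λ
local notation "Y" => ajY k n q Λ

theorem ajX_mul_ajX_of_lt {i j : Fin n} (h : i < j) : X i * X j = Λ i j • (X j * X i) := by
  simpa [ajX] using RingQuot.mkAlgHom_rel k (AJRel.xx (q := q) (Λ := Λ) h)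

theorem ajY_mul_ajY_of_lt {i j : Fin n} (h : i < j) : Y i * Y j = Λ i j • (Y j * Y i) := by
  simpa [ajY] using RingQuot.mkAlgHom_rel k (AJRel.yy (q := q) (Λ := Λ) h)

theorem ajX_mul_ajY_of_lt {i j : Fin n} (h : i < j) : X i * Y j = (Λ i j)⁻¹ • (Y j * X i) := by
  simpa [ajX, ajY] using RingQuot.mkAlgHom_rel k (AJRel.xy (q := q) (Λ := Λ) h)

theorem ajY_mul_ajX_of_lt {i j : Fin n} (h : i < j) : Y i * X j = (Λ i j)⁻¹ • (X j * Y i) := by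
  simpa [ajX, ajY] using RingQuot.mkAlgHom_rel k (AJRel.yx (q := q) (Λ := Λ) h)

theorem ajX_mul_ajY_self (i : Fin n) : X i * Y i = q i • (Y i * X i) + 1 := by
  simpa [ajX, ajY] using RingQuot.mkAlgHom_rel k (AJRel.xyi (q := q) (Λ := Λ) i)

variable {q Λ} (hΛs : ∀ i j, Λ i j * Λ j i = 1)
include hΛs

theorem ajX_mul_ajX {i j : Fin n} (h : j ≠ i) : X i * X j = Λ i j • (X j * X i) := by
  rcases h.lt_or_gt with h | h
  · rw [ajX_mul_ajX_of_lt q Λ h, smul_smul, hΛs, one_smul]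
  · exact ajX_mul_ajX_of_lt q Λ h

theorem ajY_mul_ajY {i j : Fin n} (h : j ≠ i) : Y i * Y j = Λ i j • (Y j * Y i) := by
  rcases h.lt_or_gt with h | h
  · rw [ajY_mul_ajY_of_lt q Λ h, smul_smul, hΛs, one_smul]
  · exact ajY_mul_ajY_of_lt q Λ h

theorem ajX_mul_ajY {i j : Fin n} (h : j ≠ i) : X i * Y j = (Λ i j)⁻¹ • (Y j * X i) := by
  rcases h.lt_or_gt with h | h
  · rw [ajY_mul_ajX_of_lt q Λ h, smul_smul, ← mul_inv_rev, hΛs, inv_one, one_smul]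
  · exact ajX_mul_ajY_of_lt q Λ h

theorem ajY_mul_ajX {i j : Fin n} (h : j ≠ i) : Y i * X j = (Λ i j)⁻¹ • (X j * Y i) := by
  rcases h.lt_or_gt with h | h
  · rw [ajX_mul_ajY_of_lt q Λ h, smul_smul, ← mul_inv_rev, hΛs, inv_one, one_smul]
  · exact ajY_mul_ajX_of_lt q Λ h

end AJWeylRelations

section AJWeylBasis

variable {k : Type*} [Field k] {n : ℕ} {q : Fin n → k} {Λ : Fin n → Fin n → k}

local notation "X" => ajX k n q Λ
local notation "Y" => ajY k n q Λ
local notation "Z" => ajZ k n q Λ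

variable (q Λ) in
/-- The factor `b_{k⃗,i}` of `ajB` when `k_i = m`. -/
def ajPow (i : Fin n) (m : ℤ) : AJWeyl k n q Λ :=
  if 0 ≤ m then X i ^ m.toNat else Y i ^ (-m).toNat

theorem ajPow_of_nonneg {i : Fin n} {m : ℤ} (h : 0 ≤ m) : ajPow q Λ i m = X i ^ m.toNat :=
  if_pos h

theorem ajPow_of_nonpos {i : Fin n} {m : ℤ} (h : m ≤ 0) : ajPow q Λ i m = Y i ^ (-m).toNat := by
  rcases h.lt_or_eq with h | rfl
  · exact if_neg h.not_ge
  · simp [ajPow]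

section Commutation

variable (hΛs : ∀ i j, Λ i j * Λ j i = 1)
include hΛs

theorem ajX_mul_ajPow {i j : Fin n} (h : j ≠ i) (m : ℤ) :
    X i * ajPow q Λ j m = Λ i j ^ m • (ajPow q Λ j m * X i) := by
  rcases le_total 0 m with hm | hm
  · rw [ajPow_of_nonneg hm, mul_pow_eq_smul_of_mul_eq_smul (ajX_mul_ajX hΛs h), ← zpow_natCast,
      Int.toNat_of_nonneg hm]
  · rw [ajPow_of_nonpos hm, mul_pow_eq_smul_of_mul_eq_smul (ajX_mul_ajY hΛs h), inv_pow,
      ← zpow_natCast, Int.toNat_of_nonneg (neg_nonneg.mpr hm), zpow_neg, inv_inv]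

theorem ajY_mul_ajPow {i j : Fin n} (h : j ≠ i) (m : ℤ) :
    Y i * ajPow q Λ j m = (Λ i j ^ m)⁻¹ • (ajPow q Λ j m * Y i) := by
  rcases le_total 0 m with hm | hm
  · rw [ajPow_of_nonneg hm, mul_pow_eq_smul_of_mul_eq_smul (ajY_mul_ajX hΛs h), inv_pow,
      ← zpow_natCast, Int.toNat_of_nonneg hm]
  · rw [ajPow_of_nonpos hm, mul_pow_eq_smul_of_mul_eq_smul (ajY_mul_ajY hΛs h),
      ← zpow_natCast, Int.toNat_of_nonneg (neg_nonneg.mpr hm), zpow_neg]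

theorem commute_ajZ_ajPow {i j : Fin n} (h : j ≠ i) (m : ℤ) : Commute (Z i) (ajPow q Λ j m) := by
  have hΛ : Λ i j ≠ 0 := left_ne_zero_of_mul_eq_one (hΛs i j)
  have hX : Commute (Z i) (X j) :=
    commute_commutator_of_mul_eq_smul hΛ (ajX_mul_ajX hΛs h) (ajY_mul_ajX hΛs h)
  have hY : Commute (Z i) (Y j) := by
    refine commute_commutator_of_mul_eq_smul (inv_ne_zero hΛ) (ajX_mul_ajY hΛs h) ?_
    rw [inv_inv]
    exact ajY_mul_ajY hΛs h
  unfold ajPow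
  split_ifs
  exacts [hX.pow_right _, hY.pow_right _]

theorem ajX_mul_ajB {i : Fin n} {kv kv' : Fin n → ℤ} (hkv : ∀ j ≠ i, kv j = kv' j) {v}
    (hv : ∀ j, i < j → Commute v (ajPow q Λ j (kv j)))
    (hi : X i * ajPow q Λ i (kv i) = ajPow q Λ i (kv' i) * v) :
    X i * ajB k n q Λ kv =
      (∏ j with j < i, Λ i j ^ kv j) • (ajB k n q Λ kv' * v) :=
  mul_prod_finRange_map_eq_smul i (fun j hj => by rw [hkv j hj])
    (fun j hj => ajX_mul_ajPow hΛs hj.ne _) hv hi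

theorem ajY_mul_ajB {i : Fin n} {kv kv' : Fin n → ℤ} (hkv : ∀ j ≠ i, kv j = kv' j) {v}
    (hv : ∀ j, i < j → Commute v (ajPow q Λ j (kv j)))
    (hi : Y i * ajPow q Λ i (kv i) = ajPow q Λ i (kv' i) * v) :
    Y i * ajB k n q Λ kv =
      (∏ j with j < i, Λ i j ^ kv j)⁻¹ • (ajB k n q Λ kv' * v) := by
  rw [← Finset.prod_inv_distrib]
  exact mul_prod_finRange_map_eq_smul i (fun j hj => by rw [hkv j hj])
    (fun j hj => ajY_mul_ajPow hΛs hj.ne _) hv hi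

end Commutation

theorem ajX_mul_ajPow_of_nonneg {i : Fin n} {m : ℤ} (h : 0 ≤ m) :
    X i * ajPow q Λ i m = ajPow q Λ i (m + 1) := by
  rw [ajPow_of_nonneg h, ajPow_of_nonneg (by omega), ← pow_succ']
  congr 1
  omega

theorem ajY_mul_ajPow_of_nonpos {i : Fin n} {m : ℤ} (h : m ≤ 0) :
    Y i * ajPow q Λ i m = ajPow q Λ i (m - 1) := by
  rw [ajPow_of_nonpos h, ajPow_of_nonpos (by omega), ← pow_succ']
  congr 1
  omega

theorem ajX_mul_ajPow_of_neg (hq1 : ∀ i, q i ≠ 1) {i : Fin n} {m : ℤ} (h : m < 0) :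
    X i * ajPow q Λ i m =
      ajPow q Λ i (m + 1) * ((q i - 1)⁻¹ • (q i ^ (-m) • Z i - 1)) := by
  obtain ⟨l, rfl⟩ : ∃ l : ℕ, m = -(l + 1 : ℕ) := ⟨(-m - 1).toNat, by omega⟩
  rw [ajPow_of_nonpos (by omega), ajPow_of_nonpos (by omega), neg_neg, zpow_natCast,
    show (-(-((l + 1 : ℕ) : ℤ) + 1)).toNat = l by omega, Int.toNat_natCast]
  exact mul_pow_succ_of_qWeyl (ajX_mul_ajY_self q Λ i) (hq1 i) l

theorem ajY_mul_ajPow_of_pos (hq : ∀ i, q i ≠ 0) (hq1 : ∀ i, q i ≠ 1) {i : Fin n} {m : ℤ}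
    (h : 0 < m) :
    Y i * ajPow q Λ i m =
      ajPow q Λ i (m - 1) * ((q i - 1)⁻¹ • (q i ^ (-m + 1) • Z i - 1)) := by
  obtain ⟨l, rfl⟩ : ∃ l : ℕ, m = (l + 1 : ℕ) := ⟨(m - 1).toNat, by omega⟩
  rw [ajPow_of_nonneg (by omega), ajPow_of_nonneg (by omega), Int.toNat_natCast,
    show (((l + 1 : ℕ) : ℤ) - 1).toNat = l by omega, show -((l + 1 : ℕ) : ℤ) + 1 = -l by omega]
  exact pow_succ_mul_of_qWeyl (ajX_mul_ajY_self q Λ i) (hq i) (hq1 i) l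

end AJWeylBasis

theorem aj_x_y_mul_b_general {k : Type*} [Field k] {n : ℕ}
    (q : Fin n → k) (Λ : Fin n → Fin n → k)
    (hq : ∀ i, q i ≠ 0) (hq1 : ∀ i, q i ≠ 1)
    (hΛs : ∀ i j, Λ i j * Λ j i = 1) :
    ∀ (kv : Fin n → ℤ) (i : Fin n),
      (0 ≤ kv i → ajX k n q Λ i * ajB k n q Λ kv =
        (∏ j ∈ Finset.univ.filter (fun j => j < i), Λ i j ^ (kv j)) •
          ajB k n q Λ (kv + Pi.single i 1)) ∧
      (kv i < 0 → ajX k n q Λ i * ajB k n q Λ kv =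
        (∏ j ∈ Finset.univ.filter (fun j => j < i), Λ i j ^ (kv j)) •
          (ajB k n q Λ (kv + Pi.single i 1) *
            ((q i - 1)⁻¹ • ((q i ^ (-(kv i))) • ajZ k n q Λ i - 1)))) ∧
      (0 < kv i → ajY k n q Λ i * ajB k n q Λ kv =
        (∏ j ∈ Finset.univ.filter (fun j => j < i), Λ i j ^ (kv j))⁻¹ •
          (ajB k n q Λ (kv - Pi.single i 1) *
            ((q i - 1)⁻¹ • ((q i ^ (-(kv i) + 1)) • ajZ k n q Λ i - 1)))) ∧
      (kv i ≤ 0 → ajY k n q Λ i * ajB k n q Λ kv =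
        (∏ j ∈ Finset.univ.filter (fun j => j < i), Λ i j ^ (kv j))⁻¹ •
          ajB k n q Λ (kv - Pi.single i 1)) := by
  intro kv i
  have hadd : ∀ j ≠ i, kv j = (kv + Pi.single i 1 : Fin n → ℤ) j := fun j hj => by simp [hj]
  have hsub : ∀ j ≠ i, kv j = (kv - Pi.single i 1 : Fin n → ℤ) j := fun j hj => by simp [hj]
  have hadd_i : (kv + Pi.single i 1 : Fin n → ℤ) i = kv i + 1 := by simp
  have hsub_i : (kv - Pi.single i 1 : Fin n → ℤ) i = kv i - 1 := by simp
  have hone : ∀ j, i < j → Commute 1 (ajPow q Λ j (kv j)) := fun _ _ => Commute.one_left _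
  have hw (c : k) : ∀ j, i < j →
      Commute ((q i - 1)⁻¹ • (c • ajZ k n q Λ i - 1)) (ajPow q Λ j (kv j)) := fun j hj =>
    (((commute_ajZ_ajPow hΛs hj.ne' _).smul_left c).sub_left (Commute.one_left _)).smul_left _
  refine ⟨fun h => ?_, fun h => ?_, fun h => ?_, fun h => ?_⟩
  · simpa only [mul_one] using
      ajX_mul_ajB hΛs hadd hone (by rw [hadd_i, mul_one, ajX_mul_ajPow_of_nonneg h])
  · exact ajX_mul_ajB hΛs hadd (hw _) (by rw [hadd_i, ajX_mul_ajPow_of_neg hq1 h])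
  · exact ajY_mul_ajB hΛs hsub (hw _) (by rw [hsub_i, ajY_mul_ajPow_of_pos hq hq1 h])
  · simpa only [mul_one] using
      ajY_mul_ajB hΛs hsub hone (by rw [hsub_i, mul_one, ajY_mul_ajPow_of_nonpos h])

/-- Lemma 3.1.2: the formulas for multiplication of the basis elements `b_{k⃗}` by the
generators `x_i` and `y_i` of `𝒜ₙ^{q,Λ}`. -/
theorem aj_x_y_mul_b {k : Type*} [Field k] {n : ℕ}
    (q : Fin n → k) (Λ : Fin n → Fin n → k)
    (hq : ∀ i, q i ≠ 0) (hq1 : ∀ i, q i ≠ 1) (hΛ : ∀ i j, Λ i j ≠ 0) (hΛd : ∀ i, Λ i i = 1)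
    (hΛs : ∀ i j, Λ i j * Λ j i = 1) :
    ∀ (kv : Fin n → ℤ) (i : Fin n),
      (0 ≤ kv i → ajX k n q Λ i * ajB k n q Λ kv =
        (∏ j ∈ Finset.univ.filter (fun j => j < i), Λ i j ^ (kv j)) •
          ajB k n q Λ (kv + Pi.single i 1)) ∧
      (kv i < 0 → ajX k n q Λ i * ajB k n q Λ kv =
        (∏ j ∈ Finset.univ.filter (fun j => j < i), Λ i j ^ (kv j)) •
          (ajB k n q Λ (kv + Pi.single i 1) *
            ((q i - 1)⁻¹ • ((q i ^ (-(kv i))) • ajZ k n q Λ i - 1)))) ∧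
      (0 < kv i → ajY k n q Λ i * ajB k n q Λ kv =
        (∏ j ∈ Finset.univ.filter (fun j => j < i), Λ i j ^ (kv j))⁻¹ •
          (ajB k n q Λ (kv - Pi.single i 1) *
            ((q i - 1)⁻¹ • ((q i ^ (-(kv i) + 1)) • ajZ k n q Λ i - 1)))) ∧
      (kv i ≤ 0 → ajY k n q Λ i * ajB k n q Λ kv =
        (∏ j ∈ Finset.univ.filter (fun j => j < i), Λ i j ^ (kv j))⁻¹ •
          ajB k n q Λ (kv - Pi.single i 1)) :=
  aj_x_y_mul_b_general q Λ hq hq1 hΛs
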